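/- Let V be a complex inner product space of dimension n ≥ 3, let R be a Kähler curvature-type tensor on V, and let φ ∈ ℝ. Assume that for every complex 3-dimensional subspace Σ ⊆ V, every orthonormal basis (E_1,E_2,E_3) of Σ, and every unit vector v ∈ Σ one has Σ_{j=1}^3 R(v,v̄,E_j,Ē_j) − R(v,v̄,v,v̄) ≥ φ. Then for every orthonormal triple (e_1,e_2,e_l) in V, the real number Σ_{i,j=1}^2 R_{i ī j j̄} + 3(R_{1 1̄ l l̄} + R_{2 2̄ l l̄}) is at least 6φ, where Σ_{i,j=1}^2 R_{i ī j j̄} = R_{1 1̄ 1 1̄} + R_{1 1̄ 2 2̄} + R_{2 2̄ 1 1̄} + R_{2 2̄ 2 2̄}. -/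

import Mathlib

/-!
Apply `Ric^⊥ ≥ φ` on `span {e₀, e₁, e₂}` in six unit directions: `e₀`, `e₁` and
`(e₀ + a e₁)/√2` for the fourth roots of unity `a`. Averaging over `a` cancels every term of
`R(v, v̄, ·, ·)` and `R(v, v̄, v, v̄)` not invariant under `a ↦ i a`, and the six
inequalities add up to exactly the claimed one.
-/

structure IsKahlerCurvatureTensor {V : Type*} [AddCommGroup V] [Module ℂ V]
    (R : V → V → V → V → ℂ) : Prop where
  map_add₁ : ∀ x x' y z w, R (x + x') y z w = R x y z w + R x' y z w
  map_smul₁ : ∀ (a : ℂ) (x y z w : V), R (a • x) y z w = a * R x y z w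
  map_add₂ : ∀ x y y' z w, R x (y + y') z w = R x y z w + R x y' z w
  map_smul₂ : ∀ (a : ℂ) (x y z w : V), R x (a • y) z w = starRingEnd ℂ a * R x y z w
  map_add₃ : ∀ x y z z' w, R x y (z + z') w = R x y z w + R x y z' w
  map_smul₃ : ∀ (a : ℂ) (x y z w : V), R x y (a • z) w = a * R x y z w
  map_add₄ : ∀ x y z w w', R x y z (w + w') = R x y z w + R x y z w'
  map_smul₄ : ∀ (a : ℂ) (x y z w : V), R x y z (a • w) = starRingEnd ℂ a * R x y z w
  symm₁₃ : ∀ x y z w, R x y z w = R z y x w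
  symm₂₄ : ∀ x y z w, R x y z w = R x w z y
  conj_symm : ∀ x y z w, starRingEnd ℂ (R x y z w) = R y x w z

open Complex

/-- `Ric^⊥` in the direction `v`, computed in the frame `E` of the subspace containing `v`. -/
def ricPerp {V ι : Type*} [Fintype ι] (R : V → V → V → V → ℂ) (E : ι → V) (v : V) : ℂ :=
  (∑ j, R v v (E j) (E j)) - R v v v v

namespace IsKahlerCurvatureTensor

variable {V : Type*} [AddCommGroup V] [Module ℂ V] {R : V → V → V → V → ℂ}

theorem apply_swap_pairs (hR : IsKahlerCurvatureTensor R) (x y z w : V) :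
    R z w x y = R x y z w := by
  rw [hR.symm₁₃, hR.symm₂₄]

theorem map_smul_smul₁₂ (hR : IsKahlerCurvatureTensor R) (c : ℂ) (x y z w : V) :
    R (c • x) (c • y) z w = normSq c * R x y z w := by
  rw [hR.map_smul₁, hR.map_smul₂, ← mul_assoc, mul_conj]

theorem map_smul_smul₃₄ (hR : IsKahlerCurvatureTensor R) (c : ℂ) (x y z w : V) :
    R x y (c • z) (c • w) = normSq c * R x y z w := by
  rw [← hR.apply_swap_pairs, hR.map_smul_smul₁₂, hR.apply_swap_pairs]

theorem sum_map_add_pow_I_smul (hR : IsKahlerCurvatureTensor R) (x y z w : V) :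
    ∑ k : Fin 4, R (x + I ^ (k : ℕ) • y) (x + I ^ (k : ℕ) • y) z w
      = 4 * (R x x z w + R y y z w) := by
  simp only [Fin.sum_univ_four, hR.map_add₁, hR.map_add₂, hR.map_smul₁, hR.map_smul₂,
    Fin.isValue, Fin.coe_ofNat_eq_mod, Nat.zero_mod, Nat.one_mod, Nat.reduceMod,
    Nat.mod_succ, pow_zero, pow_one, I_sq, I_pow_three, map_one, map_neg, conj_I]
  ring_nf
  simp only [I_sq]
  ring

theorem sum_map_add_pow_I_smul_self (hR : IsKahlerCurvatureTensor R) (x y : V) :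
    ∑ k : Fin 4, R (x + I ^ (k : ℕ) • y) (x + I ^ (k : ℕ) • y)
        (x + I ^ (k : ℕ) • y) (x + I ^ (k : ℕ) • y)
      = 4 * (R x x x x + R y y y y + 4 * R x x y y) := by
  have h₁ : R x y y x = R x x y y := (hR.symm₂₄ x x y y).symm
  have h₂ : R y x x y = R x x y y := by rw [← hR.symm₂₄, hR.apply_swap_pairs]
  have h₃ : R y y x x = R x x y y := hR.apply_swap_pairs x x y y
  simp only [Fin.sum_univ_four, hR.map_add₁, hR.map_add₂, hR.map_add₃, hR.map_add₄,
    hR.map_smul₁, hR.map_smul₂, hR.map_smul₃, hR.map_smul₄, Fin.isValue, Fin.coe_ofNat_eq_mod,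
    Nat.zero_mod, Nat.one_mod, Nat.reduceMod,
    Nat.mod_succ, pow_zero, pow_one, I_sq, I_pow_three, map_one, map_neg, conj_I, h₁, h₂, h₃]
  ring_nf
  simp only [I_sq, I_pow_four]
  ring

theorem sum_ricPerp_smul_add_pow_I_smul (hR : IsKahlerCurvatureTensor R) {ι : Type*}
    [Fintype ι] (E : ι → V) (c : ℂ) (x y : V) :
    ∑ k : Fin 4, ricPerp R E (c • (x + I ^ (k : ℕ) • y))
      = 4 * normSq c * ∑ j, (R x x (E j) (E j) + R y y (E j) (E j))
        - 4 * normSq c ^ 2 * (R x x x x + R y y y y + 4 * R x x y y) := by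
  simp only [ricPerp, Finset.sum_sub_distrib, hR.map_smul_smul₁₂, hR.map_smul_smul₃₄,
    ← Finset.mul_sum]
  rw [Finset.sum_comm, hR.sum_map_add_pow_I_smul_self]
  simp only [hR.sum_map_add_pow_I_smul, ← Finset.mul_sum]
  ring

theorem ricPerp_key_identity (hR : IsKahlerCurvatureTensor R) (e : Fin 3 → V) {c : ℂ}
    (hc : normSq c = 1 / 2) :
    ricPerp R e (e 0) + ricPerp R e (e 1)
        + ∑ k : Fin 4, ricPerp R e (c • (e 0 + I ^ (k : ℕ) • e 1))
      = R (e 0) (e 0) (e 0) (e 0) + R (e 0) (e 0) (e 1) (e 1)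
        + R (e 1) (e 1) (e 0) (e 0) + R (e 1) (e 1) (e 1) (e 1)
        + 3 * (R (e 0) (e 0) (e 2) (e 2) + R (e 1) (e 1) (e 2) (e 2)) := by
  rw [hR.sum_ricPerp_smul_add_pow_I_smul, hc]
  simp only [ricPerp, Fin.sum_univ_three, hR.apply_swap_pairs (e 0) (e 0) (e 1) (e 1)]
  push_cast
  ring

end IsKahlerCurvatureTensor

theorem normSq_inv_sqrt_two : normSq ((√2)⁻¹ : ℝ) = 1 / 2 := by
  rw [normSq_ofReal, ← mul_inv, Real.mul_self_sqrt zero_le_two, one_div]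

theorem Orthonormal.norm_inv_sqrt_two_smul_add_smul {V ι : Type*} [NormedAddCommGroup V]
    [InnerProductSpace ℂ V] {e : ι → V} (he : Orthonormal ℂ e) {i j : ι} (hij : i ≠ j)
    {a : ℂ} (ha : ‖a‖ = 1) : ‖(((√2)⁻¹ : ℝ) : ℂ) • (e i + a • e j)‖ = 1 := by
  have hsq : ‖e i + a • e j‖ * ‖e i + a • e j‖ = 2 := by
    rw [norm_add_sq_eq_norm_sq_add_norm_sq_of_inner_eq_zero (𝕜 := ℂ), norm_smul, ha, he.1 i,
      he.1 j]
    · norm_num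
    · rw [inner_smul_right, he.2 hij, mul_zero]
  have hnorm : ‖e i + a • e j‖ = √2 := by
    rw [← hsq, Real.sqrt_mul_self (norm_nonneg _)]
  rw [norm_smul, hnorm, norm_real, Real.norm_of_nonneg (by positivity),
    inv_mul_cancel₀ (by positivity)]

theorem Ric3perp_key_inequality_general
    {V : Type*} [NormedAddCommGroup V] [InnerProductSpace ℂ V]
    (R : V → V → V → V → ℂ) (hR : IsKahlerCurvatureTensor R) (φ : ℝ)
    (hRic : ∀ K : Submodule ℂ V, Module.finrank ℂ K = 3 →
      ∀ E : Fin 3 → V, Orthonormal ℂ E → (∀ j, E j ∈ K) →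
      ∀ v ∈ K, ‖v‖ = 1 →
        φ ≤ ((∑ j : Fin 3, R v v (E j) (E j)) - R v v v v).re)
    (e : Fin 3 → V) (he : Orthonormal ℂ e) :
    6 * φ ≤ (R (e 0) (e 0) (e 0) (e 0) + R (e 0) (e 0) (e 1) (e 1)
      + R (e 1) (e 1) (e 0) (e 0) + R (e 1) (e 1) (e 1) (e 1)
      + 3 * (R (e 0) (e 0) (e 2) (e 2) + R (e 1) (e 1) (e 2) (e 2))).re := by
  set K := Submodule.span ℂ (Set.range e)
  have hK : Module.finrank ℂ K = 3 := by
    rw [finrank_span_eq_card he.linearIndependent, Fintype.card_fin]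
  have he_mem : ∀ j, e j ∈ K := fun j => Submodule.subset_span ⟨j, rfl⟩
  have hφ : ∀ v ∈ K, ‖v‖ = 1 → φ ≤ (ricPerp R e v).re := hRic K hK e he he_mem
  set c : ℂ := (((√2)⁻¹ : ℝ) : ℂ)
  have hturn : ∀ k : Fin 4, φ ≤ (ricPerp R e (c • (e 0 + I ^ (k : ℕ) • e 1))).re := fun k =>
    hφ _ (K.smul_mem _ (K.add_mem (he_mem 0) (K.smul_mem _ (he_mem 1))))
      (he.norm_inv_sqrt_two_smul_add_smul (by decide) (by simp))
  calc 6 * φ = φ + φ + ∑ _k : Fin 4, φ := by rw [Fin.sum_univ_four]; ring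
    _ ≤ (ricPerp R e (e 0)).re + (ricPerp R e (e 1)).re
        + ∑ k : Fin 4, (ricPerp R e (c • (e 0 + I ^ (k : ℕ) • e 1))).re := by
      gcongr with k
      exacts [hφ _ (he_mem 0) (he.1 0), hφ _ (he_mem 1) (he.1 1), hturn k]
    _ = _ := by
      rw [← hR.ricPerp_key_identity e normSq_inv_sqrt_two, add_re, add_re, re_sum]

/-- **The key intermediate inequality in case (2) of Theorem 1.** Let `V` be a
complex inner product space of dimension `n ≥ 3`, `R` a Kähler curvature-type
tensor and `φ ∈ ℝ`. If `Ric_3^⊥ ≥ φ` pointwise, then for every orthonormal triple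
`(e₁, e₂, e_l)`,
`Σ_{i,j=1}^2 R_{iījj̄} + 3(R_{11̄ll̄} + R_{22̄ll̄}) ≥ 6φ`. -/
theorem Ric3perp_key_inequality
    {V : Type*} [NormedAddCommGroup V] [InnerProductSpace ℂ V] [FiniteDimensional ℂ V]
    (hn : 3 ≤ Module.finrank ℂ V)
    (R : V → V → V → V → ℂ) (hR : IsKahlerCurvatureTensor R) (φ : ℝ)
    (hRic : ∀ K : Submodule ℂ V, Module.finrank ℂ K = 3 →
      ∀ E : Fin 3 → V, Orthonormal ℂ E → (∀ j, E j ∈ K) →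
      ∀ v ∈ K, ‖v‖ = 1 →
        φ ≤ ((∑ j : Fin 3, R v v (E j) (E j)) - R v v v v).re)
    (e : Fin 3 → V) (he : Orthonormal ℂ e) :
    6 * φ ≤ (R (e 0) (e 0) (e 0) (e 0) + R (e 0) (e 0) (e 1) (e 1)
      + R (e 1) (e 1) (e 0) (e 0) + R (e 1) (e 1) (e 1) (e 1)
      + 3 * (R (e 0) (e 0) (e 2) (e 2) + R (e 1) (e 1) (e 2) (e 2))).re :=
  Ric3perp_key_inequality_general R hR φ hRic e he
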